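/- arXiv:0908.4593 — 2 statements merged into one kernel-verified Lean document; each statement's English description precedes it below -/
import Mathlib

section
/- Let H : ℝ → ℝ and ρ₀ : ℝ → ℝ be differentiable. Define the isotropic, rotation-free ansatz v(t,x) = H(t)x, ρ(t,x) = ρ₀(t), φ(t,x) = (2πG/3) ρ₀(t) |x|². Then (v, ρ, φ) satisfies the Newtonian dust system on all of ℝ × ℝ³ if and only if for all t the Friedmann equations with dust hold: Ḣ(t) = −H(t)² − (4πG/3) ρ₀(t) and ρ̇₀(t) = −3 H(t) ρ₀(t). -/
open MeasureTheory Real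
open scoped ENNReal
noncomputable section

/-- ℝ³ with Cartesian coordinates. -/
abbrev V3 := Fin 3 → ℝ

/-- Partial derivative `∂_i f (x)` of a scalar function on ℝ³. -/
def pd (f : V3 → ℝ) (i : Fin 3) (x : V3) : ℝ := fderiv ℝ f x (Pi.single i 1)

/-- The Newtonian dust (Euler–Poisson) system with gravitational constant `Gc`:
(i) `∂ₜ v^a + v^b ∂_b v^a = −∂_a φ`,
(ii) `∂ₜ ρ + v^a ∂_a ρ = −ρ ∂_a v^a`,
(iii) `Δφ = 4πG ρ`, at every time `t` and point `x`. -/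
def NewtonianDust (Gc : ℝ) (v : ℝ → V3 → V3) (ρ φ : ℝ → V3 → ℝ) : Prop :=
  ∀ t x,
    (∀ a, deriv (fun s => v s x a) t + ∑ b, v t x b * pd (fun y => v t y a) b x
        = - pd (φ t) a x) ∧
    (deriv (fun s => ρ s x) t + ∑ b, v t x b * pd (ρ t) b x
        = - ρ t x * ∑ a, pd (fun y => v t y a) a x) ∧
    (∑ a, pd (pd (φ t) a) a x = 4 * π * Gc * ρ t x)

/-!
For the ansatz one has `∂_b v^a = H δ_ab`, `∂_a φ = (4πG/3) ρ₀ x^a` and `Δφ = 4πG ρ₀`,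
so the Poisson equation holds identically, the continuity equation is exactly `ρ̇₀ = -3Hρ₀`,
and the Euler equation reads `(Ḣ + H² + (4πG/3) ρ₀) x = 0` for all `x`, which at `x = e₀`
is the first Friedmann equation.
-/

lemma pd_const (c : ℝ) (i : Fin 3) (x : V3) : pd (fun _ => c) i x = 0 := by
  simp [pd]

lemma pd_const_mul_coord (c : ℝ) (a b : Fin 3) (x : V3) :
    pd (fun y => c * y a) b x = if a = b then c else 0 := by
  have hlin : (fun y : V3 => c * y a) =
      ⇑(c • ContinuousLinearMap.proj (R := ℝ) (φ := fun _ : Fin 3 => ℝ) a) := rfl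
  rw [pd, hlin, ContinuousLinearMap.fderiv]
  simp [Pi.single_apply]

lemma hasFDerivAt_sum_sq {ι : Type*} [Fintype ι] (x : ι → ℝ) :
    HasFDerivAt (fun y : ι → ℝ => ∑ a, y a ^ 2)
      (∑ a, (2 * x a) • ContinuousLinearMap.proj (R := ℝ) (φ := fun _ : ι => ℝ) a) x :=
  (HasFDerivAt.fun_sum fun a _ =>
    ((ContinuousLinearMap.proj (R := ℝ) (φ := fun _ : ι => ℝ) a).hasFDerivAt (x := x)).pow 2)
    |>.congr_fderiv (by simp)

lemma pd_const_mul_sum_sq (k : ℝ) (i : Fin 3) :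
    pd (fun y : V3 => k * ∑ a, y a ^ 2) i = fun y => 2 * k * y i := by
  ext y
  rw [pd, ((hasFDerivAt_sum_sq y).const_mul k).fderiv]
  simp [Pi.single_apply, Finset.smul_sum, smul_smul, mul_assoc, mul_left_comm]

theorem friedmann_ansatz_iff_general (Gc : ℝ)
    (H ρ₀ : ℝ → ℝ) :
    NewtonianDust Gc (fun t x a => H t * x a) (fun t _ => ρ₀ t)
        (fun t x => (2 * π * Gc / 3) * ρ₀ t * ∑ a, (x a) ^ 2) ↔
      ∀ t, deriv H t = -(H t) ^ 2 - (4 * π * Gc / 3) * ρ₀ t ∧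
        deriv ρ₀ t = -3 * H t * ρ₀ t := by
  simp only [NewtonianDust, deriv_mul_const_field, pd_const, pd_const_mul_coord,
    pd_const_mul_sum_sq, mul_ite, mul_zero, Finset.sum_ite_eq, Finset.mem_univ, if_true,
    Finset.sum_const_zero, add_zero, Finset.sum_const, Finset.card_univ, Fintype.card_fin,
    nsmul_eq_mul, Nat.cast_ofNat]
  refine forall_congr' fun t => ⟨fun h => ?_, fun ⟨hH, hρ⟩ x => ⟨fun a => ?_, ?_, ?_⟩⟩
  · obtain ⟨heuler, hcont, -⟩ := h (Pi.single 0 1)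
    have heuler₀ := heuler 0
    simp only [Pi.single_eq_same, mul_one] at heuler₀
    constructor <;> linarith
  · rw [hH]; ring
  · rw [hρ]; ring
  · ring

/-- The isotropic, rotation-free ansatz `v(t,x) = H(t)x`, `ρ(t,x) = ρ₀(t)`,
`φ(t,x) = (2πG/3) ρ₀(t) |x|²` solves the Newtonian dust system iff the
Friedmann equations with dust hold:
`Ḣ = −H² − (4πG/3)ρ₀` and `ρ̇₀ = −3Hρ₀`. -/
theorem friedmann_ansatz_iff (Gc : ℝ) (hGc : 0 < Gc)
    (H ρ₀ : ℝ → ℝ) (hH : Differentiable ℝ H) (hρ₀ : Differentiable ℝ ρ₀) :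
    NewtonianDust Gc (fun t x a => H t * x a) (fun t _ => ρ₀ t)
        (fun t x => (2 * π * Gc / 3) * ρ₀ t * ∑ a, (x a) ^ 2) ↔
      ∀ t, deriv H t = -(H t) ^ 2 - (4 * π * Gc / 3) * ρ₀ t ∧
        deriv ρ₀ t = -3 * H t * ρ₀ t :=
  friedmann_ansatz_iff_general Gc H ρ₀
end
end

section
/- Let v be a time-dependent C¹ velocity field on ℝ³ with flow map α and let G be a bounded open set with 0 < vol(G) < ∞. Then the volume function V(t) = vol(G_t) of the comoving domain G_t = α(t,G) is differentiable and satisfies the Liouville formula V'(t) = ∫_{G_t} (div_x v)(t,x) d³x, where div_x v = ∂_a v^a. -/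
/-!
By the change of variables formula, `V s = ∫_G |det Dα_s x| dx`. Differentiating
`α_d x - α_c x = ∫_c^d v(u, α_u x) du` in `x` gives the variational equation
`∂ₛ Dα_s = Dv(s, α_s) ∘ Dα_s`, and Jacobi's formula turns it into
`∂ₛ |det Dα_s| = (div v)(s, α_s) |det Dα_s|`; changing variables back gives `∫_{G_t} div v`.
Both differentiations under the integral sign need bounds uniform in time. They come from
Grönwall's inequality: on a compact time interval, trajectories starting close to a given one stay
in a fixed ball where `v` is Lipschitz, so the maps `α_s` are locally Lipschitz uniformly in `s`.
-/

open MeasureTheory Real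
open scoped ENNReal
noncomputable section

/-- `α` is a comoving flow map for the time-dependent velocity field `v` with
initial time `t₀`: `α(t₀,·) = id`, each `α(t,·)` is a C¹ diffeomorphism of ℝ³,
and `∂ₜ α(t,x) = v(t, α(t,x))`. -/
def IsFlowMap (v : ℝ → V3 → V3) (t₀ : ℝ) (α : ℝ → V3 → V3) : Prop :=
  (∀ x, α t₀ x = x) ∧
  (∀ t, Function.Bijective (α t) ∧ ContDiff ℝ 1 (α t) ∧
    ContDiff ℝ 1 (Function.invFun (α t))) ∧
  (∀ t x, HasDerivAt (fun s => α s x) (v t (α t x)) t)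

open Set Metric Function Filter Topology Bornology
open scoped NNReal Interval

namespace Matrix

variable {n R : Type*} [Fintype n] [DecidableEq n] [CommRing R]

theorem sum_det_updateCol_mul (B M : Matrix n n R) :
    ∑ j, (M.updateCol j fun i => (B * M) i j).det = B.trace * M.det := by
  have hcol : ∀ j, (fun i => (B * M) i j) = B *ᵥ fun i => M i j := fun j => by
    ext i; simp [mul_apply, mulVec, dotProduct]
  calc ∑ j, (M.updateCol j fun i => (B * M) i j).det
      = ∑ j, (M.adjugate * B * M) j j := by
        refine Finset.sum_congr rfl fun j _ => ?_
        rw [hcol, ← cramer_apply, cramer_eq_adjugate_mulVec, mulVec_mulVec]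
        rfl
    _ = (M * M.adjugate * B).trace := by rw [← trace_mul_cycle]; rfl
    _ = B.trace * M.det := by
        rw [mul_adjugate, smul_mul, Matrix.one_mul, trace_smul, smul_eq_mul, mul_comm]

theorem hasDerivAt_det {m : ℝ → Matrix n n ℝ} {m' : Matrix n n ℝ} {t : ℝ}
    (hm : ∀ i j, HasDerivAt (fun s => m s i j) (m' i j) t) :
    HasDerivAt (fun s => (m s).det) (∑ j, ((m t).updateCol j fun i => m' i j).det) t := by
  simp only [det_apply]
  have H : HasDerivAt (fun s => ∑ σ : Equiv.Perm n, Equiv.Perm.sign σ • ∏ i, m s (σ i) i)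
      (∑ σ : Equiv.Perm n, Equiv.Perm.sign σ •
        ∑ j, (∏ i ∈ Finset.univ.erase j, m t (σ i) i) • m' (σ j) j) t :=
    HasDerivAt.fun_sum fun σ _ =>
      (HasDerivAt.fun_finsetProd fun i _ => hm (σ i) i).const_smul _
  refine H.congr_deriv ?_
  rw [Finset.sum_comm]
  refine Finset.sum_congr rfl fun σ _ => ?_
  rw [Finset.smul_sum]
  refine Finset.sum_congr rfl fun j _ => ?_
  congr 1
  rw [← Finset.prod_erase_mul _ _ (Finset.mem_univ j), smul_eq_mul]
  congr 1
  · refine Finset.prod_congr rfl fun i hi => ?_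
    simp [Finset.ne_of_mem_erase hi]
  · simp

end Matrix

section NormedSpace

variable {E : Type*} [NormedAddCommGroup E] [NormedSpace ℝ E]

theorem ContinuousLinearMap.hasDerivAt_det_of_hasDerivAt_comp [FiniteDimensional ℝ E]
    {A : ℝ → E →L[ℝ] E} {B : E →L[ℝ] E} {t : ℝ} (hA : HasDerivAt A (B ∘L A t) t) :
    HasDerivAt (fun s => (A s).det) (LinearMap.trace ℝ E B * (A t).det) t := by
  let b := Module.finBasis ℝ E
  let entry (i j : Fin (Module.finrank ℝ E)) : (E →L[ℝ] E) →L[ℝ] ℝ :=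
    LinearMap.toContinuousLinearMap (b.coord i) ∘L ContinuousLinearMap.apply ℝ E (b j)
  have hentry : ∀ i j (f : E →L[ℝ] E), entry i j f = LinearMap.toMatrix b b f i j := by
    intro i j f
    simp [entry, LinearMap.toMatrix_apply]
  have hm : ∀ i j, HasDerivAt (fun s => LinearMap.toMatrix b b (A s) i j)
      ((LinearMap.toMatrix b b B * LinearMap.toMatrix b b (A t)) i j) t := by
    intro i j
    have := (entry i j).hasFDerivAt.comp_hasDerivAt t hA
    simp only [Function.comp_def, hentry] at this
    rwa [ContinuousLinearMap.toLinearMap_comp, LinearMap.toMatrix_comp b b b] at this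
  simpa only [Matrix.sum_det_updateCol_mul, LinearMap.det_toMatrix,
    LinearMap.trace_eq_matrix_trace ℝ b] using Matrix.hasDerivAt_det hm

theorem ContinuousLinearMap.continuous_trace [FiniteDimensional ℝ E] :
    Continuous fun L : E →L[ℝ] E => LinearMap.trace ℝ E L :=
  (LinearMap.trace ℝ E ∘ₗ ContinuousLinearMap.coeLM ℝ).continuous_of_finiteDimensional

theorem det_fderiv_ne_zero_of_leftInverse {f g : E → E} {x : E} (hf : DifferentiableAt ℝ f x)
    (hg : DifferentiableAt ℝ g (f x)) (hgf : LeftInverse g f) : (fderiv ℝ f x).det ≠ 0 := by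
  have hcomp : fderiv ℝ g (f x) ∘L fderiv ℝ f x = ContinuousLinearMap.id ℝ E := by
    rw [← fderiv_comp x hg hf, hgf.comp_eq_id, fderiv_id]
  have := congrArg ContinuousLinearMap.det hcomp
  simp only [ContinuousLinearMap.det, ContinuousLinearMap.toLinearMap_comp, LinearMap.det_comp,
    ContinuousLinearMap.coe_id, LinearMap.det_id] at this
  exact right_ne_zero_of_mul_eq_one this

theorem mem_of_trajectories_ODE_of_dist_le {w : ℝ → E → E} {f g : ℝ → E} {K : Set E}
    {M : ℝ≥0} {a b δ : ℝ} (hw : ∀ u ∈ Ico a b, LipschitzOnWith M (w u) K)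
    (hf : ContinuousOn f (Icc a b)) (hf' : ∀ u ∈ Ico a b, HasDerivWithinAt f (w u (f u)) (Ici u) u)
    (hg : ContinuousOn g (Icc a b)) (hg' : ∀ u ∈ Ico a b, HasDerivWithinAt g (w u (g u)) (Ici u) u)
    (hgK : ∀ u ∈ Icc a b, ball (g u) 1 ⊆ K) (ha : dist (f a) (g a) ≤ δ)
    (hδ : δ * exp (M * (b - a)) < 1) :
    ∀ u ∈ Icc a b, f u ∈ K := by
  by_contra! ⟨u, hu, hfu⟩
  -- `τ` is the first time at which `f` is at distance `1` from `g`; before it both stay in `K`.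
  set T := Icc a b ∩ (fun s => dist (f s) (g s)) ⁻¹' Ici 1
  have hT : IsClosed T := (continuous_dist.comp_continuousOn (hf.prodMk hg))
    |>.preimage_isClosed_of_isClosed isClosed_Icc isClosed_Ici
  have hTa : BddBelow T := ⟨a, fun s hs => hs.1.1⟩
  have huT : u ∈ T := ⟨hu, not_lt.1 fun h => hfu (hgK u hu (mem_ball.2 h))⟩
  set τ := sInf T
  have hτT : τ ∈ T := hT.csInf_mem ⟨u, huT⟩ hTa
  have hτ : Icc a τ ⊆ Icc a b := Icc_subset_Icc_right hτT.1.2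
  have hτ' : Ico a τ ⊆ Ico a b := Ico_subset_Ico_right hτT.1.2
  have hbefore : ∀ s ∈ Ico a τ, dist (f s) (g s) < 1 := fun s hs =>
    not_le.1 fun h => (csInf_le hTa ⟨hτ (Ico_subset_Icc_self hs), h⟩).not_gt hs.2
  have hgron := dist_le_of_trajectories_ODE_of_mem (s := fun _ => K)
    (fun s hs => hw s (hτ' hs)) (hf.mono hτ) (fun s hs => hf' s (hτ' hs))
    (fun s hs => hgK s (hτ (Ico_subset_Icc_self hs)) (mem_ball.2 (hbefore s hs))) (hg.mono hτ)
    (fun s hs => hg' s (hτ' hs))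
    (fun s hs => hgK s (hτ (Ico_subset_Icc_self hs)) (mem_ball_self one_pos)) ha τ
    ⟨hτT.1.1, le_rfl⟩
  have hexp : exp (M * (τ - a)) ≤ exp (M * (b - a)) := exp_le_exp.2 (by gcongr; exact hτT.1.2)
  have : dist (f τ) (g τ) < 1 := by nlinarith [dist_nonneg.trans ha]
  exact this.not_ge hτT.2

variable {v α : ℝ → E → E}

theorem continuous_fderiv_of_contDiff_uncurry (hv : ContDiff ℝ 1 (uncurry v)) :
    Continuous fun p : ℝ × E => fderiv ℝ (v p.1) p.2 :=
  (ContDiff.fderiv (f := fun p : ℝ × E => v p.1) (hv.comp (contDiff_fst.fst.prodMk contDiff_snd))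
    (contDiff_snd (n := 0)) (by norm_num)).continuous

theorem differentiable_of_contDiff_uncurry (hv : ContDiff ℝ 1 (uncurry v)) (u : ℝ) :
    Differentiable ℝ (v u) :=
  (hv.comp (contDiff_const.prodMk contDiff_id)).differentiable one_ne_zero

theorem exists_lipschitzOnWith_closedBall_of_contDiff_uncurry [FiniteDimensional ℝ E]
    (hv : ContDiff ℝ 1 (uncurry v)) (a b R : ℝ) :
    ∃ M : ℝ≥0, ∀ u ∈ Icc a b, LipschitzOnWith M (v u) (closedBall 0 R) := by
  obtain ⟨M, hM⟩ := (isCompact_Icc.prod (isCompact_closedBall (0 : E) R))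
    |>.exists_bound_of_continuousOn (continuous_fderiv_of_contDiff_uncurry hv).continuousOn
  refine ⟨M.toNNReal, fun u hu =>
    (convex_closedBall _ _).lipschitzOnWith_of_nnnorm_hasFDerivWithin_le
      (fun z _ => (differentiable_of_contDiff_uncurry hv u z).hasFDerivAt.hasFDerivWithinAt)
      fun z hz => ?_⟩
  rw [← NNReal.coe_le_coe, coe_nnnorm]
  exact (hM (u, z) ⟨hu, hz⟩).trans (le_coe_toNNReal M)

structure IsC1Flow (v α : ℝ → E → E) : Prop where
  contDiff_field : ContDiff ℝ 1 (uncurry v)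
  hasDerivAt_apply : ∀ s x, HasDerivAt (fun s => α s x) (v s (α s x)) s
  contDiff_apply : ∀ s, ContDiff ℝ 1 (α s)

namespace IsC1Flow

theorem continuous_apply (hα : IsC1Flow v α) (x : E) : Continuous fun s => α s x :=
  continuous_iff_continuousAt.2 fun s => (hα.hasDerivAt_apply s x).continuousAt

theorem differentiable_apply (hα : IsC1Flow v α) (s : ℝ) : Differentiable ℝ (α s) :=
  (hα.contDiff_apply s).differentiable one_ne_zero

theorem continuous_fderiv_field_comp (hα : IsC1Flow v α) (x : E) :
    Continuous fun s => fderiv ℝ (v s) (α s x) :=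
  (continuous_fderiv_of_contDiff_uncurry hα.contDiff_field).comp
    (continuous_id.prodMk (hα.continuous_apply x))

variable [FiniteDimensional ℝ E]

theorem exists_lipschitzOnWith (hα : IsC1Flow v α) (x₀ : E) (a b : ℝ) :
    ∃ r > 0, ∃ L : ℝ≥0, ∃ R : ℝ, ∀ u ∈ Icc a b,
      LipschitzOnWith L (α u) (ball x₀ r) ∧ MapsTo (α u) (ball x₀ r) (closedBall 0 R) := by
  obtain ⟨R, hR⟩ :=
    isCompact_Icc.exists_bound_of_continuousOn (hα.continuous_apply x₀).continuousOn
  obtain ⟨M, hM⟩ :=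
    exists_lipschitzOnWith_closedBall_of_contDiff_uncurry hα.contDiff_field a b (R + 1)
  have hK : ∀ u ∈ Icc a b, ball (α u x₀) 1 ⊆ closedBall 0 (R + 1) := fun u hu z hz => by
    rw [mem_closedBall_zero_iff]
    linarith [norm_le_norm_add_norm_sub' z (α u x₀), hR u hu, (mem_ball_iff_norm.1 hz).le]
  set Λ := exp (M * (b - a))
  obtain ⟨L₀, U, hU, hL₀⟩ := (hα.contDiff_apply a).contDiffAt.exists_lipschitzOnWith
  have hclose : ∀ᶠ y in 𝓝 x₀, α a y ∈ ball (α a x₀) Λ⁻¹ :=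
    (hα.contDiff_apply a).continuous.continuousAt.eventually
      (ball_mem_nhds _ (inv_pos.2 (exp_pos _)))
  obtain ⟨r, hr, hball⟩ := Metric.mem_nhds_iff.1 (inter_mem hU hclose)
  have hmem : ∀ y ∈ ball x₀ r, ∀ u ∈ Icc a b, α u y ∈ closedBall 0 (R + 1) := fun y hy =>
    mem_of_trajectories_ODE_of_dist_le (fun u hu => hM u (Ico_subset_Icc_self hu))
      (hα.continuous_apply y).continuousOn (fun u _ => (hα.hasDerivAt_apply u y).hasDerivWithinAt)
      (hα.continuous_apply x₀).continuousOn
      (fun u _ => (hα.hasDerivAt_apply u x₀).hasDerivWithinAt) hK le_rfl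
      (by simpa [Λ] using mul_lt_mul_of_pos_right (mem_ball.1 (hball hy).2) (exp_pos (M * (b - a))))
  refine ⟨r, hr, L₀ * Λ.toNNReal, R + 1, fun u hu => ⟨?_, fun y hy => hmem y hy u hu⟩⟩
  refine LipschitzOnWith.of_dist_le_mul fun y hy y' hy' => ?_
  have hsub : Ico a u ⊆ Icc a b := Ico_subset_Icc_self.trans (Icc_subset_Icc_right hu.2)
  have hgron := dist_le_of_trajectories_ODE_of_mem (s := fun _ => closedBall (0 : E) (R + 1))
    (fun s hs => hM s (hsub hs)) (hα.continuous_apply y).continuousOn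
    (fun s _ => (hα.hasDerivAt_apply s y).hasDerivWithinAt) (fun s hs => hmem y hy s (hsub hs))
    (hα.continuous_apply y').continuousOn (fun s _ => (hα.hasDerivAt_apply s y').hasDerivWithinAt)
    (fun s hs => hmem y' hy' s (hsub hs))
    (hL₀.dist_le_mul y (hball hy).1 y' (hball hy').1) u ⟨hu.1, le_rfl⟩
  have hexp : exp (M * (u - a)) ≤ Λ := exp_le_exp.2 (by gcongr; exact hu.2)
  calc dist (α u y) (α u y') ≤ L₀ * dist y y' * exp (M * (u - a)) := hgron
    _ ≤ L₀ * dist y y' * Λ := by gcongr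
    _ = _ := by rw [NNReal.coe_mul, Real.coe_toNNReal _ (exp_pos _).le]; ring

theorem continuous_uncurry (hα : IsC1Flow v α) : Continuous (uncurry α) := by
  refine continuous_iff_continuousAt.2 fun ⟨u₀, x₀⟩ => ?_
  obtain ⟨r, hr, L, _, hL⟩ := hα.exists_lipschitzOnWith x₀ (u₀ - 1) (u₀ + 1)
  exact (continuousOn_prod_of_continuousOn_lipschitzOnWith' (uncurry α) L
    (fun u hu => (hL u (Ioo_subset_Icc_self hu)).1)
    (fun y _ => (hα.continuous_apply y).continuousOn)).continuousAt
    (prod_mem_nhds (Ioo_mem_nhds (sub_one_lt u₀) (lt_add_one u₀)) (ball_mem_nhds x₀ hr))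

theorem exists_bound_fderiv (hα : IsC1Flow v α) {S : Set E} (hS : IsCompact S) (a b : ℝ) :
    ∃ C, ∀ u ∈ Icc a b, ∀ y ∈ S, ‖fderiv ℝ (α u) y‖ ≤ C ∧ ‖fderiv ℝ (v u) (α u y)‖ ≤ C := by
  obtain ⟨C, hC⟩ : ∃ C, ∀ u ∈ Icc a b, ∀ y ∈ S, ‖fderiv ℝ (α u) y‖ ≤ C := by
    refine hS.induction_on (p := fun s => ∃ C, ∀ u ∈ Icc a b, ∀ y ∈ s, ‖fderiv ℝ (α u) y‖ ≤ C)
      ⟨0, by simp⟩ (fun s t hst ⟨C, hC⟩ => ⟨C, fun u hu y hy => hC u hu y (hst hy)⟩)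
      (fun s t ⟨C, hC⟩ ⟨D, hD⟩ => ⟨max C D, fun u hu y hy => hy.elim
        (fun hy => (hC u hu y hy).trans (le_max_left _ _))
        (fun hy => (hD u hu y hy).trans (le_max_right _ _))⟩) fun x _ => ?_
    obtain ⟨r, hr, L, _, hL⟩ := hα.exists_lipschitzOnWith x a b
    exact ⟨ball x r, mem_nhdsWithin_of_mem_nhds (ball_mem_nhds x hr), L, fun u hu y hy =>
      norm_fderiv_le_of_lipschitzOn ℝ (isOpen_ball.mem_nhds hy) (hL u hu).1⟩
  obtain ⟨D, hD⟩ := (isCompact_Icc.prod hS).exists_bound_of_continuousOn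
    ((continuous_fderiv_of_contDiff_uncurry hα.contDiff_field).comp
      (continuous_fst.prodMk hα.continuous_uncurry)).continuousOn
  exact ⟨max C D, fun u hu y hy => ⟨(hC u hu y hy).trans (le_max_left _ _),
    (hD (u, y) ⟨hu, hy⟩).trans (le_max_right _ _)⟩⟩

theorem fderiv_sub_eq_integral (hα : IsC1Flow v α) (x : E) (c d : ℝ) :
    fderiv ℝ (α d) x - fderiv ℝ (α c) x =
      ∫ u in c..d, fderiv ℝ (v u) (α u x) ∘L fderiv ℝ (α u) x := by
  borelize E
  obtain ⟨C, hC⟩ := hα.exists_bound_fderiv (isCompact_closedBall x 1) (min c d) (max c d)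
  have hF : ∀ y, Continuous fun u => v u (α u y) := fun y =>
    hα.contDiff_field.continuous.comp (continuous_id.prodMk (hα.continuous_apply y))
  have hF'meas : Measurable fun u => fderiv ℝ (v u) (α u x) ∘L fderiv ℝ (α u) x :=
    isBoundedBilinearMap_comp.continuous.measurable.comp
      ((hα.continuous_fderiv_field_comp x).measurable.prodMk
        ((measurable_fderiv_with_param ℝ hα.continuous_uncurry).comp
          (measurable_id.prodMk measurable_const)))
  have hbound : ∀ u ∈ Ι c d, ∀ y ∈ ball x 1,
      ‖fderiv ℝ (v u) (α u y) ∘L fderiv ℝ (α u) y‖ ≤ C * C := fun u hu y hy => by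
    obtain ⟨h₁, h₂⟩ := hC u (uIoc_subset_uIcc hu) y (ball_subset_closedBall hy)
    exact (ContinuousLinearMap.opNorm_comp_le _ _).trans
      (mul_le_mul h₂ h₁ (norm_nonneg _) ((norm_nonneg _).trans h₁))
  have key := intervalIntegral.hasFDerivAt_integral_of_dominated_of_fderiv_le
    (μ := volume) (F := fun y u => v u (α u y)) (ball_mem_nhds x one_pos)
    (Eventually.of_forall fun y => (hF y).aestronglyMeasurable) ((hF x).intervalIntegrable c d)
    hF'meas.aestronglyMeasurable (ae_of_all _ hbound) intervalIntegrable_const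
    (ae_of_all _ fun u _ y _ => (differentiable_of_contDiff_uncurry hα.contDiff_field u _
      ).hasFDerivAt.comp y (hα.differentiable_apply u y).hasFDerivAt)
  have hFTC : (fun y => ∫ u in c..d, v u (α u y)) = fun y => α d y - α c y := funext fun y =>
    intervalIntegral.integral_eq_sub_of_hasDerivAt (fun u _ => hα.hasDerivAt_apply u y)
      ((hF y).intervalIntegrable c d)
  rw [hFTC] at key
  exact (key.unique ((hα.differentiable_apply d x).hasFDerivAt.sub
    (hα.differentiable_apply c x).hasFDerivAt)).symm

theorem hasDerivAt_fderiv (hα : IsC1Flow v α) (t : ℝ) (x : E) :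
    HasDerivAt (fun s => fderiv ℝ (α s) x) (fderiv ℝ (v t) (α t x) ∘L fderiv ℝ (α t) x) t := by
  set g := fun u => fderiv ℝ (v u) (α u x) ∘L fderiv ℝ (α u) x
  obtain ⟨C, hC⟩ := hα.exists_bound_fderiv (isCompact_singleton (x := x)) (t - 1) (t + 1)
  have hlip : LipschitzOnWith (C * C).toNNReal (fun s => fderiv ℝ (α s) x)
      (Icc (t - 1) (t + 1)) := by
    refine LipschitzOnWith.of_dist_le_mul fun p hp q hq => ?_
    rw [dist_eq_norm, hα.fderiv_sub_eq_integral x q p, Real.dist_eq]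
    refine (intervalIntegral.norm_integral_le_of_norm_le_const fun u hu => ?_).trans
      (mul_le_mul_of_nonneg_right (le_coe_toNNReal _) (abs_nonneg _))
    obtain ⟨h₁, h₂⟩ := hC u (uIcc_subset_Icc hq hp (uIoc_subset_uIcc hu)) x rfl
    exact (ContinuousLinearMap.opNorm_comp_le _ _).trans
      (mul_le_mul h₂ h₁ (norm_nonneg _) ((norm_nonneg _).trans h₁))
  have hgc : ContinuousOn g (Ioo (t - 1) (t + 1)) :=
    (hα.continuous_fderiv_field_comp x).continuousOn.clm_comp
      (hlip.continuousOn.mono Ioo_subset_Icc_self)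
  have ht : t ∈ Ioo (t - 1) (t + 1) := ⟨sub_one_lt t, lt_add_one t⟩
  have hprim := intervalIntegral.integral_hasDerivAt_right IntervalIntegrable.refl
    (hgc.stronglyMeasurableAtFilter isOpen_Ioo t ht) (hgc.continuousAt (Ioo_mem_nhds ht.1 ht.2))
  have heq : (fun s => fderiv ℝ (α s) x) = fun s => fderiv ℝ (α t) x + ∫ u in t..s, g u :=
    funext fun s => by rw [← hα.fderiv_sub_eq_integral x t s, add_sub_cancel]
  rw [heq]
  exact hprim.const_add _

theorem hasDerivAt_abs_det_fderiv (hα : IsC1Flow v α) {t : ℝ} {x : E}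
    (hdet : (fderiv ℝ (α t) x).det ≠ 0) :
    HasDerivAt (fun s => |(fderiv ℝ (α s) x).det|)
      (LinearMap.trace ℝ E (fderiv ℝ (v t) (α t x)) * |(fderiv ℝ (α t) x).det|) t := by
  refine ((hasDerivAt_abs hdet).comp t (ContinuousLinearMap.hasDerivAt_det_of_hasDerivAt_comp
    (hα.hasDerivAt_fderiv t x))).congr_deriv ?_
  rw [mul_left_comm, sign_mul_self]

theorem setIntegral_image_eq [MeasurableSpace E] [BorelSpace E] (μ : Measure E)
    [μ.IsAddHaarMeasure] (hα : IsC1Flow v α) (hinj : ∀ s, Injective (α s)) {G : Set E}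
    (hGm : MeasurableSet G) (s : ℝ) (g : E → ℝ) :
    ∫ y in α s '' G, g y ∂μ = ∫ x in G, g (α s x) * |(fderiv ℝ (α s) x).det| ∂μ := by
  rw [integral_image_eq_integral_abs_det_fderiv_smul μ hGm
    (fun x _ => (hα.differentiable_apply s x).hasFDerivAt.hasFDerivWithinAt) (hinj s).injOn g]
  simp only [smul_eq_mul, mul_comm]

theorem exists_bound_trace_mul_abs_det (hα : IsC1Flow v α) {S : Set E} (hS : IsCompact S)
    (a b : ℝ) : ∃ D, ∀ u ∈ Icc a b, ∀ x ∈ S,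
      ‖LinearMap.trace ℝ E (fderiv ℝ (v u) (α u x)) * |(fderiv ℝ (α u) x).det|‖ ≤ D := by
  obtain ⟨C, hC⟩ := hα.exists_bound_fderiv hS a b
  obtain ⟨D, hD⟩ := ((isCompact_closedBall (0 : E →L[ℝ] E) C).prod
    (isCompact_closedBall (0 : E →L[ℝ] E) C)).exists_bound_of_continuousOn
    ((ContinuousLinearMap.continuous_trace.comp continuous_fst).mul
      (ContinuousLinearMap.continuous_det.comp continuous_snd).abs).continuousOn
  refine ⟨D, fun u hu x hx => ?_⟩
  obtain ⟨h₁, h₂⟩ := hC u hu x hx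
  exact hD (_, _) ⟨mem_closedBall_zero_iff.2 h₂, mem_closedBall_zero_iff.2 h₁⟩

theorem hasDerivAt_measureReal_image [MeasurableSpace E] [BorelSpace E] (μ : Measure E)
    [μ.IsAddHaarMeasure] (hα : IsC1Flow v α) (hinj : ∀ s, Injective (α s))
    (hdet : ∀ s x, (fderiv ℝ (α s) x).det ≠ 0) {G : Set E} (hGm : MeasurableSet G)
    (hGb : IsBounded G) (t : ℝ) :
    HasDerivAt (fun s => μ.real (α s '' G))
      (∫ y in α t '' G, LinearMap.trace ℝ E (fderiv ℝ (v t) y) ∂μ) t := by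
  have hvol : (fun s => μ.real (α s '' G)) = fun s => ∫ x in G, |(fderiv ℝ (α s) x).det| ∂μ :=
    funext fun s => by simpa using hα.setIntegral_image_eq μ hinj hGm s 1
  rw [hvol, hα.setIntegral_image_eq μ hinj hGm]
  obtain ⟨D, hD⟩ := hα.exists_bound_trace_mul_abs_det hGb.isCompact_closure (t - 1) (t + 1)
  have hJ : ∀ s, Continuous fun x => |(fderiv ℝ (α s) x).det| := fun s =>
    (ContinuousLinearMap.continuous_det.comp
      ((hα.contDiff_apply s).continuous_fderiv one_ne_zero)).abs
  have hJ' : Continuous fun x =>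
      LinearMap.trace ℝ E (fderiv ℝ (v t) (α t x)) * |(fderiv ℝ (α t) x).det| :=
    (ContinuousLinearMap.continuous_trace.comp
      ((continuous_fderiv_of_contDiff_uncurry hα.contDiff_field).comp
        (continuous_const.prodMk (hα.contDiff_apply t).continuous))).mul (hJ t)
  have hG : μ G < ∞ :=
    (measure_mono subset_closure).trans_lt hGb.isCompact_closure.measure_lt_top
  exact (hasDerivAt_integral_of_dominated_loc_of_deriv_le (ball_mem_nhds t one_pos)
    (Eventually.of_forall fun s => (hJ s).aestronglyMeasurable)
    (((hJ t).continuousOn.integrableOn_compact hGb.isCompact_closure).mono_set subset_closure)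
    hJ'.aestronglyMeasurable
    (ae_restrict_of_forall_mem hGm fun x hx s hs =>
      hD s (Ioo_subset_Icc_self (Real.ball_eq_Ioo t 1 ▸ hs)) x (subset_closure hx))
    (integrableOn_const hG.ne)
    (ae_of_all _ fun x s _ => hα.hasDerivAt_abs_det_fderiv (hdet s x))).2

end IsC1Flow

end NormedSpace

theorem sum_pd_eq_trace_fderiv {f : V3 → V3} {x : V3} (hf : DifferentiableAt ℝ f x) :
    ∑ a, pd (fun y => f y a) a x = LinearMap.trace ℝ V3 (fderiv ℝ f x) := by
  rw [LinearMap.trace_eq_matrix_trace ℝ (Pi.basisFun ℝ (Fin 3)), LinearMap.toMatrix_eq_toMatrix',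
    Matrix.trace]
  refine Finset.sum_congr rfl fun a _ => ?_
  have hfa : HasFDerivAt (fun y => f y a) (ContinuousLinearMap.proj a ∘L fderiv ℝ f x) x :=
    (ContinuousLinearMap.proj (R := ℝ) (φ := fun _ : Fin 3 => ℝ) a).hasFDerivAt.comp x
      hf.hasFDerivAt
  rw [pd, hfa.fderiv]
  simp [LinearMap.toMatrix'_apply]

theorem liouville_volume_formula_general (v : ℝ → V3 → V3)
    (hv : ContDiff ℝ 1 (fun p : ℝ × V3 => v p.1 p.2))
    (t₀ : ℝ) (α : ℝ → V3 → V3) (hα : IsFlowMap v t₀ α)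
    (G : Set V3) (hGo : IsOpen G) (hGb : Bornology.IsBounded G) :
    ∀ t, HasDerivAt (fun s => (volume (α s '' G)).toReal)
      (∫ x in α t '' G, ∑ a, pd (fun y => v t y a) a x) t := by
  obtain ⟨-, hdiffeo, hαt⟩ := hα
  have hflow : IsC1Flow v α := ⟨hv, hαt, fun s => (hdiffeo s).2.1⟩
  have hdet : ∀ s x, (fderiv ℝ (α s) x).det ≠ 0 := fun s x =>
    det_fderiv_ne_zero_of_leftInverse (hflow.differentiable_apply s x)
      ((hdiffeo s).2.2.differentiable one_ne_zero _) (leftInverse_invFun (hdiffeo s).1.injective)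
  intro t
  have hdiv : ∀ x, ∑ a, pd (fun y => v t y a) a x = LinearMap.trace ℝ V3 (fderiv ℝ (v t) x) :=
    fun x => sum_pd_eq_trace_fderiv (differentiable_of_contDiff_uncurry hv t x)
  simp only [hdiv]
  exact hflow.hasDerivAt_measureReal_image volume (fun s => (hdiffeo s).1.injective) hdet
    hGo.measurableSet hGb t

/-- Liouville formula: the volume `V(t) = vol(α(t,G))` of a comoving domain is
differentiable with `V'(t) = ∫_{G_t} div v d³x`. -/
theorem liouville_volume_formula (v : ℝ → V3 → V3)
    (hv : ContDiff ℝ 1 (fun p : ℝ × V3 => v p.1 p.2))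
    (t₀ : ℝ) (α : ℝ → V3 → V3) (hα : IsFlowMap v t₀ α)
    (G : Set V3) (hGo : IsOpen G) (hGb : Bornology.IsBounded G)
    (hGpos : 0 < volume G) (hGfin : volume G < ⊤) :
    ∀ t, HasDerivAt (fun s => (volume (α s '' G)).toReal)
      (∫ x in α t '' G, ∑ a, pd (fun y => v t y a) a x) t :=
  liouville_volume_formula_general v hv t₀ α hα G hGo hGb
end
end
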